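/- arXiv:2501.05373 — 2 statements merged into one kernel-verified Lean document; each statement's English description precedes it below -/
import Mathlib

section
/- The function t ↦ 2·√(t·tan(π/t)) is strictly decreasing and convex on the interval (2, ∞). -/
/-- The interpolation `p(t) = 2√(t·tan(π/t))` of the isoperimetric constants of
unit-area regular polygons. -/
noncomputable def polyIsopConst (t : ℝ) : ℝ :=
  2 * Real.sqrt (t * Real.tan (Real.pi / t))

/-!
Write `p = 2√g` with `g t = t tan (π/t)` and `x = π/t ∈ (0, π/2)`. Then
`g' t = tan x - x / cos² x = -(x - sin x cos x) / cos² x < 0` because `sin 2x < 2x`.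
Convexity of `√g` amounts to `g'² ≤ 2 g g''`, where `g'' t = 2π² tan x / (t³ cos² x)`; this reduces
to `x - sin x cos x ≤ 2x sin x`, which follows from the cubic Taylor bounds on `sin x` and `sin 2x`
since `x < π/2 < √7 - 1`.
-/

open Real Set

lemma convexOn_sqrt_of_hasDerivAt {s : Set ℝ} (hs : Convex ℝ s) (hso : IsOpen s)
    {f f' f'' : ℝ → ℝ} (hf : ∀ x ∈ s, HasDerivAt f (f' x) x)
    (hf' : ∀ x ∈ s, HasDerivAt f' (f'' x) x) (hpos : ∀ x ∈ s, 0 < f x)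
    (h : ∀ x ∈ s, f' x ^ 2 ≤ 2 * f x * f'' x) : ConvexOn ℝ s fun x ↦ √(f x) := by
  have hsqrt (x) (hx : x ∈ s) : HasDerivAt (fun y ↦ √(f y)) (f' x / (2 * √(f x))) x :=
    (hf x hx).sqrt (hpos x hx).ne'
  refine convexOn_of_hasDerivWithinAt2_nonneg (f' := fun x ↦ f' x / (2 * √(f x)))
    (f'' := fun x ↦ (2 * f x * f'' x - f' x ^ 2) / (4 * f x * √(f x))) hs
    (fun x hx ↦ (hsqrt x hx).continuousAt.continuousWithinAt) ?_ ?_ ?_ <;>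
    rw [hso.interior_eq]
  · exact fun x hx ↦ (hsqrt x hx).hasDerivWithinAt
  · intro x hx
    have hfx := hpos x hx
    refine ((hf' x hx).div ((hsqrt x hx).const_mul 2) (by positivity)).hasDerivWithinAt.congr_deriv ?_
    have : √(f x) ^ 2 = f x := sq_sqrt hfx.le
    field_simp
    rw [this]
    ring
  · intro x hx
    have := hpos x hx
    exact div_nonneg (by linarith [h x hx]) (by positivity)

namespace Real

lemma sin_mul_cos_lt_self {x : ℝ} (hx : 0 < x) : sin x * cos x < x := by
  have := sin_lt (by positivity : 0 < 2 * x)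
  rw [sin_two_mul] at this
  linarith

lemma self_sub_sin_mul_cos_le_two_mul_mul_sin {x : ℝ} (hx₀ : 0 ≤ x) (hx : x < π / 2) :
    x - sin x * cos x ≤ 2 * x * sin x := by
  have h_sin := sin_ge_sub_cube hx₀
  have h_sin_two := sin_ge_sub_cube (by positivity : 0 ≤ 2 * x)
  rw [sin_two_mul] at h_sin_two
  have h_quad : 0 ≤ 6 - 2 * x - x ^ 2 := by nlinarith [pi_lt_d2]
  nlinarith [mul_le_mul_of_nonneg_left h_sin (by positivity : 0 ≤ 2 * x),
    mul_nonneg (sq_nonneg x) h_quad]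

lemma hasDerivAt_pi_div {t : ℝ} (ht : t ≠ 0) :
    HasDerivAt (fun s ↦ π / s) (-(π / t ^ 2)) t := by
  simpa [div_eq_mul_inv, ← neg_mul] using (hasDerivAt_inv ht).const_mul π

lemma hasDerivAt_mul_tan_pi_div {t : ℝ} (ht : t ≠ 0) (hcos : cos (π / t) ≠ 0) :
    HasDerivAt (fun s ↦ s * tan (π / s)) (tan (π / t) - π / t / cos (π / t) ^ 2) t := by
  refine ((hasDerivAt_id t).mul ((hasDerivAt_tan hcos).comp t (hasDerivAt_pi_div ht))).congr_deriv ?_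
  simp only [id, Function.comp_def]
  field_simp
  ring

lemma hasDerivAt_tan_pi_div_sub {t : ℝ} (ht : t ≠ 0) (hcos : cos (π / t) ≠ 0) :
    HasDerivAt (fun s ↦ tan (π / s) - π / s / cos (π / s) ^ 2)
      (2 * π ^ 2 / t ^ 3 * tan (π / t) / cos (π / t) ^ 2) t := by
  have h_cos_sq := ((hasDerivAt_cos (π / t)).comp t (hasDerivAt_pi_div ht)).pow 2
  refine (((hasDerivAt_tan hcos).comp t (hasDerivAt_pi_div ht)).sub
    ((hasDerivAt_pi_div ht).div h_cos_sq (pow_ne_zero 2 hcos))).congr_deriv ?_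
  simp only [Function.comp_def, Pi.pow_apply]
  rw [tan_eq_sin_div_cos]
  field_simp
  ring

lemma tan_sub_div_cos_sq_neg {x : ℝ} (hx₀ : 0 < x) (hx : x < π / 2) :
    tan x - x / cos x ^ 2 < 0 := by
  have hcos := cos_pos_of_mem_Ioo ⟨by linarith, hx⟩
  rw [tan_eq_sin_div_cos, sub_neg, div_lt_div_iff₀ hcos (by positivity)]
  nlinarith [sin_mul_cos_lt_self hx₀]

lemma sq_tan_sub_div_cos_sq_le {x : ℝ} (hx₀ : 0 < x) (hx : x < π / 2) :
    (tan x - x / cos x ^ 2) ^ 2 ≤ 4 * x ^ 2 * tan x ^ 2 / cos x ^ 2 := by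
  have hcos := cos_pos_of_mem_Ioo ⟨by linarith, hx⟩
  have h_eq : tan x - x / cos x ^ 2 = -((x - sin x * cos x) / cos x ^ 2) := by
    rw [tan_eq_sin_div_cos]; field_simp; ring
  have h_rhs : 4 * x ^ 2 * tan x ^ 2 / cos x ^ 2 = (2 * x * sin x) ^ 2 / (cos x ^ 2) ^ 2 := by
    rw [tan_eq_sin_div_cos]; field_simp; ring
  rw [h_eq, h_rhs, neg_sq, div_pow]
  have h_nonneg : 0 ≤ x - sin x * cos x := by linarith [sin_mul_cos_lt_self hx₀]
  gcongr
  exact self_sub_sin_mul_cos_le_two_mul_mul_sin hx₀.le hx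

end Real

/-- The function `t ↦ 2√(t·tan(π/t))` is strictly decreasing and convex on `(2, ∞)`. -/
theorem stmt1 :
    StrictAntiOn polyIsopConst (Set.Ioi 2) ∧ ConvexOn ℝ (Set.Ioi 2) polyIsopConst := by
  have ht₀ (t : ℝ) (ht : t ∈ Ioi 2) : 0 < t := two_pos.trans ht
  have hx (t : ℝ) (ht : t ∈ Ioi 2) : 0 < π / t ∧ π / t < π / 2 :=
    ⟨div_pos pi_pos (ht₀ t ht), div_lt_div_of_pos_left pi_pos two_pos ht⟩
  have hcos (t : ℝ) (ht : t ∈ Ioi 2) : cos (π / t) ≠ 0 :=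
    (cos_pos_of_mem_Ioo ⟨by linarith [(hx t ht).1, pi_pos], (hx t ht).2⟩).ne'
  have hpos (t : ℝ) (ht : t ∈ Ioi 2) : 0 < t * tan (π / t) :=
    mul_pos (ht₀ t ht) (tan_pos_of_pos_of_lt_pi_div_two (hx t ht).1 (hx t ht).2)
  have hg (t : ℝ) (ht : t ∈ Ioi 2) := hasDerivAt_mul_tan_pi_div (ht₀ t ht).ne' (hcos t ht)
  have hg' (t : ℝ) (ht : t ∈ Ioi 2) := hasDerivAt_tan_pi_div_sub (ht₀ t ht).ne' (hcos t ht)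
  constructor
  · have hg_anti : StrictAntiOn (fun t ↦ t * tan (π / t)) (Ioi 2) :=
      strictAntiOn_of_hasDerivWithinAt_neg (convex_Ioi 2)
        (fun t ht ↦ (hg t ht).continuousAt.continuousWithinAt)
        (fun t ht ↦ (hg t (interior_subset ht)).hasDerivWithinAt)
        (fun t ht ↦ tan_sub_div_cos_sq_neg (hx t (interior_subset ht)).1 (hx t (interior_subset ht)).2)
    intro a ha b hb hab
    have := hg_anti ha hb hab
    unfold polyIsopConst
    gcongr
    exact (hpos b hb).le
  · refine (convexOn_sqrt_of_hasDerivAt (convex_Ioi 2) isOpen_Ioi hg hg' hpos ?_).smul two_pos.le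
    intro t ht
    have h := sq_tan_sub_div_cos_sq_le (hx t ht).1 (hx t ht).2
    convert h using 1
    field_simp
    ring
end

section
/- Let arc₁(x) denote the length of the circular arc that subtends a chord of length 1 and together with the chord encloses area x ≥ 0. Then arc₁ is strictly increasing on (0,∞), arc₁(0) = 1, arc₁'(0) = 0, and arc₁''(0) = 12. -/
/-!
Parametrize by the half-angle `θ ∈ (0, π)`. The area `p θ = (θ - sin θ cos θ) / (4 sin² θ)` has
`p' = (sin θ - θ cos θ) / (2 sin³ θ) > 0` and tends to `0` at `0⁺` and to `∞` at `π⁻`, so it is a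
bijection onto `(0, ∞)` and `arc₁ = g ∘ p⁻¹` with `g θ = θ / sin θ`, also increasing. The chain
rule gives `arc₁' = g' / p' = 2 sin θ` and `arc₁'' = 2 cos θ / p' = 4 sin³ θ cos θ / (sin θ - θ cos θ)`,
whose limits at `θ → 0⁺` are `0` and `12` because `(sin θ - θ cos θ) / θ³ → 1/3`; the one-sided
derivatives at `0` are these limits.
-/

/-- `f` is the function `arc₁`: `f x` is the length of the circular arc subtending a
chord of length `1` and enclosing, together with the chord, a region of area `x`.
The implicit characterization: for the half-angle `θ ∈ (0, π)` one has chord `2R sin θ = 1`,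
area `p(θ) = (θ − sin θ cos θ)/(4 sin² θ)` and arc length `θ / sin θ`. Continuity on
`[0, ∞)` pins down the value at `0`. -/
def IsArcOne (f : ℝ → ℝ) : Prop :=
  ContinuousOn f (Set.Ici 0) ∧
  ∀ θ ∈ Set.Ioo 0 Real.pi,
    f ((θ - Real.sin θ * Real.cos θ) / (4 * Real.sin θ ^ 2)) = θ / Real.sin θ

open Real Set Filter Topology Function

-- `IsArcOne f` says that `f ∘ segmentArea = arcLength` on `(0, π)`.
noncomputable def segmentArea (θ : ℝ) : ℝ := (θ - sin θ * cos θ) / (4 * sin θ ^ 2)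
noncomputable def arcLength (θ : ℝ) : ℝ := θ / sin θ

lemma hasDerivAt_segmentArea {θ : ℝ} (hs : sin θ ≠ 0) :
    HasDerivAt segmentArea ((sin θ - θ * cos θ) / (2 * sin θ ^ 3)) θ := by
  have hN : HasDerivAt (fun θ => θ - sin θ * cos θ) (2 * sin θ ^ 2) θ :=
    ((hasDerivAt_id' θ).sub ((hasDerivAt_sin θ).mul (hasDerivAt_cos θ))).congr_deriv
      (by linear_combination -sin_sq_add_cos_sq θ)
  have hD : HasDerivAt (fun θ => 4 * sin θ ^ 2) (8 * sin θ * cos θ) θ :=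
    (((hasDerivAt_sin θ).pow 2).const_mul 4).congr_deriv (by ring)
  refine (hN.div hD (by positivity)).congr_deriv ?_
  field_simp
  linear_combination 16 * sin θ * sin_sq_add_cos_sq θ

lemma hasDerivAt_arcLength {θ : ℝ} (hs : sin θ ≠ 0) :
    HasDerivAt arcLength ((sin θ - θ * cos θ) / sin θ ^ 2) θ :=
  ((hasDerivAt_id' θ).div (hasDerivAt_sin θ) hs).congr_deriv (by ring)

lemma sin_sub_mul_cos_pos {θ : ℝ} (h0 : 0 < θ) (hπ : θ < π) : 0 < sin θ - θ * cos θ := by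
  rcases le_or_gt (cos θ) 0 with hc | hc
  · nlinarith [sin_pos_of_pos_of_lt_pi h0 hπ]
  · have hθ : θ < π / 2 := by
      by_contra! h
      exact hc.not_ge (cos_nonpos_of_pi_div_two_le_of_le h (by linarith))
    have ht := lt_tan h0 hθ
    rw [tan_eq_sin_div_cos, lt_div_iff₀ hc] at ht
    linarith

lemma strictMonoOn_Ioo_of_hasDerivAt_pos {g g' : ℝ → ℝ} {a b : ℝ}
    (hg : ∀ x ∈ Ioo a b, HasDerivAt g (g' x) x) (hpos : ∀ x ∈ Ioo a b, 0 < g' x) :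
    StrictMonoOn g (Ioo a b) :=
  strictMonoOn_of_hasDerivWithinAt_pos (convex_Ioo a b)
    (fun x hx => (hg x hx).continuousAt.continuousWithinAt)
    (fun x hx => (hg x (by rwa [interior_Ioo] at hx)).hasDerivWithinAt)
    (fun x hx => hpos x (by rwa [interior_Ioo] at hx))

lemma strictMonoOn_segmentArea : StrictMonoOn segmentArea (Ioo 0 π) :=
  strictMonoOn_Ioo_of_hasDerivAt_pos
    (fun θ hθ => hasDerivAt_segmentArea (sin_pos_of_pos_of_lt_pi hθ.1 hθ.2).ne')
    fun θ ⟨h0, hπ⟩ => by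
      have := sin_pos_of_pos_of_lt_pi h0 hπ
      have := sin_sub_mul_cos_pos h0 hπ
      positivity

lemma strictMonoOn_arcLength : StrictMonoOn arcLength (Ioo 0 π) :=
  strictMonoOn_Ioo_of_hasDerivAt_pos
    (fun θ hθ => hasDerivAt_arcLength (sin_pos_of_pos_of_lt_pi hθ.1 hθ.2).ne')
    fun θ ⟨h0, hπ⟩ => by
      have := sin_pos_of_pos_of_lt_pi h0 hπ
      have := sin_sub_mul_cos_pos h0 hπ
      positivity

lemma segmentArea_pos {θ : ℝ} (h0 : 0 < θ) (hπ : θ < π) : 0 < segmentArea θ := by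
  have hs := sin_pos_of_pos_of_lt_pi h0 hπ
  have : sin θ * cos θ < θ := by
    linarith [sin_two_mul θ, sin_lt (by linarith : 0 < 2 * θ)]
  unfold segmentArea
  have : 0 < θ - sin θ * cos θ := by linarith
  positivity

-- `tan θ > θ` gives `θ cos² θ < sin θ cos θ`, i.e. `θ - sin θ cos θ < θ sin² θ`.
lemma segmentArea_lt {θ : ℝ} (h0 : 0 < θ) (hθ : θ < π / 2) : segmentArea θ < θ / 4 := by
  have hs := sin_pos_of_pos_of_lt_pi h0 (by linarith [pi_pos])
  have hc := cos_pos_of_mem_Ioo ⟨by linarith, hθ⟩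
  have hK := mul_pos hc (sin_sub_mul_cos_pos h0 (by linarith [pi_pos]))
  rw [segmentArea, div_lt_div_iff₀ (by positivity) four_pos]
  nlinarith [sin_sq_add_cos_sq θ]

lemma tendsto_segmentArea_nhdsGT_zero : Tendsto segmentArea (𝓝[>] 0) (𝓝 0) := by
  have hquarter : Tendsto (fun θ : ℝ => θ / 4) (𝓝[>] 0) (𝓝 0) :=
    tendsto_nhdsWithin_of_tendsto_nhds ((continuous_id.div_const 4).tendsto' 0 0 (by simp))
  have hsmall : Ioo 0 (π / 2) ∈ 𝓝[>] (0 : ℝ) := Ioo_mem_nhdsGT (by positivity)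
  refine tendsto_of_tendsto_of_tendsto_of_le_of_le' tendsto_const_nhds hquarter ?_ ?_
  · filter_upwards [hsmall] with θ ⟨h0, hθ⟩ using (segmentArea_pos h0 (by linarith [pi_pos])).le
  · filter_upwards [hsmall] with θ ⟨h0, hθ⟩ using (segmentArea_lt h0 hθ).le

lemma tendsto_segmentArea_nhdsLT_pi : Tendsto segmentArea (𝓝[<] π) atTop := by
  have hN : Tendsto (fun θ => θ - sin θ * cos θ) (𝓝[<] π) (𝓝 π) :=
    tendsto_nhdsWithin_of_tendsto_nhds
      ((by fun_prop : Continuous fun θ => θ - sin θ * cos θ).tendsto' π π (by simp))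
  have hD : Tendsto (fun θ => 4 * sin θ ^ 2) (𝓝[<] π) (𝓝[>] 0) := by
    refine tendsto_nhdsWithin_of_tendsto_nhds_of_eventually_within _ ?_ ?_
    · exact tendsto_nhdsWithin_of_tendsto_nhds
        ((by fun_prop : Continuous fun θ => 4 * sin θ ^ 2).tendsto' π 0 (by simp))
    · filter_upwards [Ioo_mem_nhdsLT pi_pos] with θ ⟨h0, hπ⟩
      have := sin_pos_of_pos_of_lt_pi h0 hπ
      exact mem_Ioi.2 (by positivity)
  exact hN.pos_mul_atTop pi_pos (tendsto_inv_nhdsGT_zero.comp hD)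

lemma surjOn_segmentArea : SurjOn segmentArea (Ioo 0 π) (Ioi 0) := by
  have hcont : ContinuousOn segmentArea (Ioo 0 π) := fun θ hθ =>
    (hasDerivAt_segmentArea (sin_pos_of_pos_of_lt_pi hθ.1 hθ.2).ne').continuousAt.continuousWithinAt
  exact isPreconnected_Ioo.intermediate_value_Ioi
    (le_principal_iff.2 (Ioo_mem_nhdsGT pi_pos)) (le_principal_iff.2 (Ioo_mem_nhdsLT pi_pos))
    hcont tendsto_segmentArea_nhdsGT_zero tendsto_segmentArea_nhdsLT_pi

noncomputable def halfAngle : ℝ → ℝ := invFunOn segmentArea (Ioo 0 π)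

lemma halfAngle_mem {x : ℝ} (hx : 0 < x) : halfAngle x ∈ Ioo 0 π :=
  invFunOn_mem (surjOn_segmentArea hx)

lemma segmentArea_halfAngle {x : ℝ} (hx : 0 < x) : segmentArea (halfAngle x) = x :=
  invFunOn_eq (surjOn_segmentArea hx)

lemma halfAngle_segmentArea {θ : ℝ} (hθ : θ ∈ Ioo 0 π) : halfAngle (segmentArea θ) = θ :=
  strictMonoOn_segmentArea.injOn.leftInvOn_invFunOn hθ

lemma strictMonoOn_halfAngle : StrictMonoOn halfAngle (Ioi 0) := fun x hx y hy hxy => by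
  rwa [← strictMonoOn_segmentArea.lt_iff_lt (halfAngle_mem hx) (halfAngle_mem hy),
    segmentArea_halfAngle hx, segmentArea_halfAngle hy]

lemma continuousAt_halfAngle {x : ℝ} (hx : 0 < x) : ContinuousAt halfAngle x := by
  refine strictMonoOn_halfAngle.continuousAt_of_image_mem_nhds (Ioi_mem_nhds hx) ?_
  refine mem_of_superset (Ioo_mem_nhds (halfAngle_mem hx).1 (halfAngle_mem hx).2) ?_
  exact fun θ hθ => ⟨segmentArea θ, segmentArea_pos hθ.1 hθ.2, halfAngle_segmentArea hθ⟩

lemma tendsto_halfAngle_nhdsGT_zero : Tendsto halfAngle (𝓝[>] 0) (𝓝[>] 0) := by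
  refine (nhdsGT_basis (0 : ℝ)).tendsto_right_iff.2 fun ε hε => ?_
  set δ := min ε (π / 2)
  have hδ : δ ∈ Ioo 0 π :=
    ⟨lt_min hε (by positivity), (min_le_right _ _).trans_lt (by linarith [pi_pos])⟩
  filter_upwards [Ioo_mem_nhdsGT (segmentArea_pos hδ.1 hδ.2)] with x ⟨hx, hxδ⟩
  refine ⟨(halfAngle_mem hx).1, (?_ : halfAngle x < δ).trans_le (min_le_left _ _)⟩
  rwa [← strictMonoOn_segmentArea.lt_iff_lt (halfAngle_mem hx) hδ, segmentArea_halfAngle hx]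

lemma hasDerivAt_halfAngle {x : ℝ} (hx : 0 < x) :
    HasDerivAt halfAngle
      (2 * sin (halfAngle x) ^ 3 / (sin (halfAngle x) - halfAngle x * cos (halfAngle x))) x := by
  obtain ⟨h0, hπ⟩ := halfAngle_mem hx
  have hs := sin_pos_of_pos_of_lt_pi h0 hπ
  have hK := sin_sub_mul_cos_pos h0 hπ
  rw [← inv_div]
  exact (hasDerivAt_segmentArea hs.ne').of_local_left_inverse (continuousAt_halfAngle hx)
    (by positivity) (eventually_of_mem (Ioi_mem_nhds hx) fun y hy => segmentArea_halfAngle hy)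

lemma tendsto_two_mul_sin_nhdsGT_zero : Tendsto (fun θ => 2 * sin θ) (𝓝[>] 0) (𝓝 0) :=
  tendsto_nhdsWithin_of_tendsto_nhds ((by fun_prop : Continuous fun θ => 2 * sin θ).tendsto' 0 0
    (by simp))

lemma tendsto_sinc_nhdsGT_zero : Tendsto sinc (𝓝[>] 0) (𝓝 1) :=
  tendsto_nhdsWithin_of_tendsto_nhds (continuous_sinc.tendsto' 0 1 sinc_zero)

lemma tendsto_arcLength_nhdsGT_zero : Tendsto arcLength (𝓝[>] 0) (𝓝 1) := by
  have := tendsto_sinc_nhdsGT_zero.inv₀ one_ne_zero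
  rw [inv_one] at this
  refine this.congr' ?_
  filter_upwards [self_mem_nhdsWithin] with θ hθ
  rw [sinc_of_ne_zero (ne_of_gt hθ), inv_div, arcLength]

lemma tendsto_sin_sub_mul_cos_div_cube :
    Tendsto (fun θ => (sin θ - θ * cos θ) / θ ^ 3) (𝓝[>] 0) (𝓝 (1 / 3)) := by
  refine HasDerivAt.lhopital_zero_right_on_Ioo (f' := fun θ => θ * sin θ)
    (g' := fun θ => 3 * θ ^ 2) one_pos
    (fun θ _ => ((hasDerivAt_sin θ).sub ((hasDerivAt_id' θ).mul (hasDerivAt_cos θ))).congr_deriv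
      (by ring))
    (fun θ _ => (hasDerivAt_pow 3 θ).congr_deriv (by norm_num))
    (fun θ hθ => by have := hθ.1; positivity)
    (tendsto_nhdsWithin_of_tendsto_nhds
      ((by fun_prop : Continuous fun θ => sin θ - θ * cos θ).tendsto' 0 0 (by simp)))
    (tendsto_nhdsWithin_of_tendsto_nhds ((continuous_pow 3).tendsto' 0 0 (by simp))) ?_
  refine (tendsto_sinc_nhdsGT_zero.div_const 3).congr' ?_
  filter_upwards [self_mem_nhdsWithin] with θ hθ
  rw [sinc_of_ne_zero (ne_of_gt hθ)]
  field_simp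

lemma tendsto_secondDeriv_nhdsGT_zero :
    Tendsto (fun θ => 4 * sin θ ^ 3 * cos θ / (sin θ - θ * cos θ)) (𝓝[>] 0) (𝓝 12) := by
  have hcos : Tendsto cos (𝓝[>] 0) (𝓝 1) :=
    tendsto_nhdsWithin_of_tendsto_nhds (continuous_cos.tendsto' 0 1 cos_zero)
  have := (((tendsto_sinc_nhdsGT_zero.pow 3).const_mul 4).mul hcos).div
    tendsto_sin_sub_mul_cos_div_cube (by norm_num)
  norm_num at this
  refine this.congr' ?_
  filter_upwards [Ioo_mem_nhdsGT pi_pos] with θ ⟨h0, hπ⟩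
  have := sin_sub_mul_cos_pos h0 hπ
  rw [Pi.div_apply, sinc_of_ne_zero h0.ne']
  field_simp

lemma hasDerivWithinAt_Ici_zero_of_tendsto_halfAngle {g h : ℝ → ℝ} {L : ℝ}
    (hg : ContinuousWithinAt g (Ioi 0) 0) (hderiv : ∀ x > 0, HasDerivAt g (h (halfAngle x)) x)
    (hL : Tendsto h (𝓝[>] 0) (𝓝 L)) : HasDerivWithinAt g L (Ici 0) 0 :=
  hasDerivWithinAt_Ici_of_tendsto_deriv
    (fun x hx => (hderiv x hx).differentiableAt.differentiableWithinAt) hg self_mem_nhdsWithin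
    ((hL.comp tendsto_halfAngle_nhdsGT_zero).congr'
      (eventually_nhdsWithin_of_forall fun x hx => (hderiv x hx).deriv.symm))

namespace IsArcOne

variable {f : ℝ → ℝ}

lemma eq_arcLength_halfAngle (hf : IsArcOne f) {x : ℝ} (hx : 0 < x) :
    f x = arcLength (halfAngle x) := by
  conv_lhs => rw [← segmentArea_halfAngle hx]
  exact hf.2 _ (halfAngle_mem hx)

lemma strictMonoOn (hf : IsArcOne f) : StrictMonoOn f (Ioi 0) := fun x hx y hy hxy => by
  rw [hf.eq_arcLength_halfAngle hx, hf.eq_arcLength_halfAngle hy]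
  exact strictMonoOn_arcLength (halfAngle_mem hx) (halfAngle_mem hy)
    (strictMonoOn_halfAngle hx hy hxy)

lemma apply_zero (hf : IsArcOne f) : f 0 = 1 :=
  tendsto_nhds_unique ((hf.1 0 self_mem_Ici).mono Ioi_subset_Ici_self)
    ((tendsto_arcLength_nhdsGT_zero.comp tendsto_halfAngle_nhdsGT_zero).congr'
      (eventually_nhdsWithin_of_forall fun _ hx => (hf.eq_arcLength_halfAngle hx).symm))

lemma hasDerivAt (hf : IsArcOne f) {x : ℝ} (hx : 0 < x) :
    HasDerivAt f (2 * sin (halfAngle x)) x := by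
  obtain ⟨h0, hπ⟩ := halfAngle_mem hx
  have hs := sin_pos_of_pos_of_lt_pi h0 hπ
  have hK := sin_sub_mul_cos_pos h0 hπ
  refine (((hasDerivAt_arcLength hs.ne').comp x (hasDerivAt_halfAngle hx)).congr_of_eventuallyEq
    ?_).congr_deriv ?_
  · filter_upwards [Ioi_mem_nhds hx] with y hy using hf.eq_arcLength_halfAngle hy
  · field_simp

lemma derivWithin_Ici_eq (hf : IsArcOne f) {x : ℝ} (hx : 0 < x) :
    derivWithin f (Ici 0) x = 2 * sin (halfAngle x) := by
  rw [derivWithin_of_mem_nhds (Ici_mem_nhds hx), (hf.hasDerivAt hx).deriv]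

lemma hasDerivAt_derivWithin_Ici (hf : IsArcOne f) {x : ℝ} (hx : 0 < x) :
    HasDerivAt (derivWithin f (Ici 0)) (4 * sin (halfAngle x) ^ 3 * cos (halfAngle x) /
      (sin (halfAngle x) - halfAngle x * cos (halfAngle x))) x := by
  obtain ⟨h0, hπ⟩ := halfAngle_mem hx
  have hK := sin_sub_mul_cos_pos h0 hπ
  refine ((((hasDerivAt_sin _).comp x (hasDerivAt_halfAngle hx)).const_mul 2).congr_of_eventuallyEq
    ?_).congr_deriv ?_
  · filter_upwards [Ioi_mem_nhds hx] with y hy using hf.derivWithin_Ici_eq hy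
  · field_simp
    ring

lemma hasDerivWithinAt_zero (hf : IsArcOne f) : HasDerivWithinAt f 0 (Ici 0) 0 :=
  hasDerivWithinAt_Ici_zero_of_tendsto_halfAngle ((hf.1 0 self_mem_Ici).mono Ioi_subset_Ici_self)
    (fun _ hx => hf.hasDerivAt hx) tendsto_two_mul_sin_nhdsGT_zero

lemma derivWithin_zero (hf : IsArcOne f) : derivWithin f (Ici 0) 0 = 0 :=
  hf.hasDerivWithinAt_zero.derivWithin (uniqueDiffWithinAt_Ici 0)

lemma hasDerivWithinAt_derivWithin_zero (hf : IsArcOne f) :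
    HasDerivWithinAt (derivWithin f (Ici 0)) 12 (Ici 0) 0 := by
  have hcont : ContinuousWithinAt (derivWithin f (Ici 0)) (Ioi 0) 0 := by
    rw [ContinuousWithinAt, hf.derivWithin_zero]
    exact (tendsto_two_mul_sin_nhdsGT_zero.comp tendsto_halfAngle_nhdsGT_zero).congr'
      (eventually_nhdsWithin_of_forall fun _ hx => (hf.derivWithin_Ici_eq hx).symm)
  exact hasDerivWithinAt_Ici_zero_of_tendsto_halfAngle hcont
    (fun _ hx => hf.hasDerivAt_derivWithin_Ici hx) tendsto_secondDeriv_nhdsGT_zero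

end IsArcOne

/-- `arc₁` is strictly increasing on `(0, ∞)`, `arc₁(0) = 1`, `arc₁'(0) = 0` and
`arc₁''(0) = 12` (one-sided derivatives at `0`). -/
theorem stmt5 (f : ℝ → ℝ) (hf : IsArcOne f) :
    f 0 = 1 ∧
    StrictMonoOn f (Set.Ioi 0) ∧
    derivWithin f (Set.Ici 0) 0 = 0 ∧
    derivWithin (derivWithin f (Set.Ici 0)) (Set.Ici 0) 0 = 12 :=
  ⟨hf.apply_zero, hf.strictMonoOn, hf.derivWithin_zero,
    hf.hasDerivWithinAt_derivWithin_zero.derivWithin (uniqueDiffWithinAt_Ici 0)⟩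
end
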